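/- arXiv:2501.18277 — 2 statements merged into one kernel-verified Lean document; each statement's English description precedes it below -/
import Mathlib

section
/- Let β > 0 and let g : (0, ∞) → ℝ be differentiable. If for every L ≥ 0 the point u = e^{−L/β} is a global minimizer over (0, ∞) of the function u ↦ u·L + β·g(u), then g'(u) = ln u for every u ∈ (0, 1]. -/
open Real

theorem deriv_eq_neg_div_of_isLocalMin_mul_add {g : ℝ → ℝ} {u L β : ℝ} (hβ : β ≠ 0)
    (hg : DifferentiableAt ℝ g u) (hmin : IsLocalMin (fun v => v * L + β * g v) u) :
    deriv g u = -L / β := by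
  have hderiv : HasDerivAt (fun v => v * L + β * g v) (L + β * deriv g u) u :=
    (((hasDerivAt_id u).mul_const L).add (hg.hasDerivAt.const_mul β)).congr_deriv (by ring)
  have hzero : L + β * deriv g u = 0 := hmin.hasDerivAt_eq_zero hderiv
  field_simp
  linarith

theorem exp_neg_neg_mul_log_div {β u : ℝ} (hβ : β ≠ 0) (hu : 0 < u) :
    exp (-(-β * log u) / β) = u := by
  rw [neg_mul, neg_neg, mul_div_cancel_left₀ _ hβ, exp_log hu]

/-- For `β > 0` and `g` differentiable on `(0, ∞)`: if for every `L ≥ 0` the point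
`u = e^{−L/β}` is a global minimizer over `(0, ∞)` of `u ↦ u·L + β·g(u)`, then
`g'(u) = ln u` for every `u ∈ (0, 1]`. -/
theorem sebra_regularizer_necessity (β : ℝ) (hβ : 0 < β) (g : ℝ → ℝ)
    (hg : ∀ u : ℝ, 0 < u → DifferentiableAt ℝ g u)
    (hmin : ∀ L : ℝ, 0 ≤ L → ∀ u : ℝ, 0 < u →
      Real.exp (-L / β) * L + β * g (Real.exp (-L / β)) ≤ u * L + β * g u) :
    ∀ u : ℝ, u ∈ Set.Ioc (0 : ℝ) 1 → deriv g u = Real.log u := by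
  rintro u ⟨hu0, hu1⟩
  -- The loss level whose prescribed optimal weight is `u`.
  set L := -β * log u
  have hL : 0 ≤ L := mul_nonneg_of_nonpos_of_nonpos (by linarith) (log_nonpos hu0.le hu1)
  have hexp : exp (-L / β) = u := exp_neg_neg_mul_log_div hβ.ne' hu0
  have hloc : IsLocalMin (fun v => v * L + β * g v) u :=
    Filter.mem_of_superset (Ioi_mem_nhds hu0) fun v hv => hexp ▸ hmin L hL v hv
  rw [deriv_eq_neg_div_of_isLocalMin_mul_add hβ.ne' (hg u hu0) hloc, ← hexp]
  simp
end

section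
/- Let β > 0 and λ > 0 satisfy λ/β ≤ 1/e. Then there exists a unique z* ∈ [1/e, 1) with z*·ln z* = −λ/β, and, setting p_critical = (z*)^β, for every p ∈ [e^{−β}, 1] one has p > e^{−λ / p^{1/β}} if and only if p > p_critical. -/
/-- `x ↦ x * log x` is strictly monotone on `[1/e, ∞)`. -/
lemma sebra_aux_strictMonoOn :
    StrictMonoOn (fun x : ℝ => x * Real.log x) (Set.Ici (1 / Real.exp 1)) := by
  have hepos : (0:ℝ) < 1 / Real.exp 1 := by positivity
  apply strictMonoOn_of_deriv_pos (convex_Ici _)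
  · exact (continuous_id.continuousOn).mul
      (Real.continuousOn_log.mono (fun x hx => by
        have : (0:ℝ) < x := lt_of_lt_of_le hepos hx
        exact ne_of_gt this))
  · intro x hx
    rw [interior_Ici] at hx
    have hxpos : (0:ℝ) < x := lt_trans hepos hx
    have : deriv (fun x : ℝ => x * Real.log x) x = Real.log x + 1 := by
      have h1 : HasDerivAt (fun x : ℝ => x * Real.log x) (1 * Real.log x + x * x⁻¹) x :=
        (hasDerivAt_id x).mul (Real.hasDerivAt_log (ne_of_gt hxpos))
      rw [h1.deriv]
      field_simp
    rw [this]
    have : Real.log (1 / Real.exp 1) < Real.log x := Real.log_lt_log hepos hx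
    rw [Real.log_div one_ne_zero (Real.exp_ne_zero 1), Real.log_one, Real.log_exp] at this
    linarith

/-- For `β > 0` and `λ > 0` with `λ/β ≤ 1/e`, there is a unique `z* ∈ [1/e, 1)` with
`z*·ln z* = −λ/β`, and, setting `p_critical = (z*)^β`, for every `p ∈ [e^{−β}, 1]`
one has `p > e^{−λ / p^{1/β}}` iff `p > p_critical`. -/
theorem sebra_p_critical (β lam : ℝ) (hβ : 0 < β) (hlam : 0 < lam)
    (hsmall : lam / β ≤ 1 / Real.exp 1) :
    ∃ z : ℝ, (z ∈ Set.Ico (1 / Real.exp 1) 1 ∧ z * Real.log z = -lam / β) ∧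
      (∀ z' : ℝ, z' ∈ Set.Ico (1 / Real.exp 1) 1 → z' * Real.log z' = -lam / β →
        z' = z) ∧
      (∀ p : ℝ, p ∈ Set.Icc (Real.exp (-β)) 1 →
        (p > Real.exp (-lam / p ^ (1 / β)) ↔ p > z ^ β)) := by
  have hepos : (0:ℝ) < 1 / Real.exp 1 := by positivity
  have hele : (1 / Real.exp 1 : ℝ) ≤ 1 := by
    rw [div_le_one (Real.exp_pos 1)]
    linarith [Real.add_one_le_exp 1]
  set f : ℝ → ℝ := fun x => x * Real.log x with hf
  have hcont : ContinuousOn f (Set.Icc (1 / Real.exp 1) 1) :=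
    (continuous_id.continuousOn).mul
      (Real.continuousOn_log.mono (fun x hx => ne_of_gt (lt_of_lt_of_le hepos hx.1)))
  have hfa : f (1 / Real.exp 1) = -(1 / Real.exp 1) := by
    simp [hf, Real.log_div one_ne_zero (Real.exp_ne_zero 1), Real.log_exp]
  have hfb : f 1 = 0 := by simp [hf]
  have hmem : (-lam / β) ∈ Set.Icc (f (1 / Real.exp 1)) (f 1) := by
    rw [hfa, hfb]
    constructor
    · rw [neg_div]
      linarith
    · have : 0 < lam / β := div_pos hlam hβ
      rw [neg_div]; linarith
  obtain ⟨z, hzmem, hzval0⟩ := intermediate_value_Icc hele hcont hmem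
  have hzval : z * Real.log z = -lam / β := hzval0
  have hmono := sebra_aux_strictMonoOn
  have hz1 : z < 1 := by
    rcases lt_or_eq_of_le hzmem.2 with h | h
    · exact h
    · exfalso
      rw [h] at hzval; simp at hzval
      have : 0 < lam / β := div_pos hlam hβ
      rw [neg_div] at hzval
      linarith
  have hzIco : z ∈ Set.Ico (1 / Real.exp 1) 1 := ⟨hzmem.1, hz1⟩
  refine ⟨z, ⟨hzIco, hzval⟩, ?_, ?_⟩
  · -- uniqueness
    intro z' hz' hz'val
    have h1 : z' ∈ Set.Ici (1 / Real.exp 1) := hz'.1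
    have h2 : z ∈ Set.Ici (1 / Real.exp 1) := hzmem.1
    rcases lt_trichotomy z' z with h | h | h
    · exfalso
      have h3 : z' * Real.log z' < z * Real.log z := hmono h1 h2 h
      rw [hz'val, hzval] at h3; exact lt_irrefl _ h3
    · exact h
    · exfalso
      have h3 : z * Real.log z < z' * Real.log z' := hmono h2 h1 h
      rw [hz'val, hzval] at h3; exact lt_irrefl _ h3
  · -- the equivalence
    intro p hp
    have hppos : 0 < p := lt_of_lt_of_le (Real.exp_pos _) hp.1
    set q : ℝ := p ^ (1 / β) with hq
    have hqpos : 0 < q := Real.rpow_pos_of_pos hppos _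
    have hqge : 1 / Real.exp 1 ≤ q := by
      have : (Real.exp (-β)) ^ (1 / β) ≤ p ^ (1 / β) :=
        Real.rpow_le_rpow (le_of_lt (Real.exp_pos _)) hp.1 (by positivity)
      calc 1 / Real.exp 1 = Real.exp (-1) := by
            rw [Real.exp_neg]; field_simp
        _ = (Real.exp (-β)) ^ (1 / β) := by
            rw [← Real.exp_mul]
            congr 1; field_simp
        _ ≤ q := this
    have hpq : p = q ^ β := by
      rw [hq, ← Real.rpow_mul (le_of_lt hppos), one_div, inv_mul_cancel₀ (ne_of_gt hβ),
        Real.rpow_one]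
    have hlogp : Real.log p = β * Real.log q := by
      rw [hq, Real.log_rpow hppos, ← mul_assoc, mul_one_div, div_self (ne_of_gt hβ), one_mul]
    -- step 1: p > exp(-lam/q) ↔ -lam/q < log p
    have step1 : (p > Real.exp (-lam / q)) ↔ -lam / q < Real.log p := by
      constructor
      · intro h
        have := Real.log_lt_log (Real.exp_pos _) h
        rwa [Real.log_exp] at this
      · intro h
        calc Real.exp (-lam / q) < Real.exp (Real.log p) := Real.exp_lt_exp.mpr h
          _ = p := Real.exp_log hppos
    -- step 2: -lam/q < log p ↔ z*log z < q*log q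
    have step2 : (-lam / q < Real.log p) ↔ z * Real.log z < q * Real.log q := by
      rw [hlogp, hzval, div_lt_iff₀ hqpos, div_lt_iff₀ hβ, mul_assoc,
        mul_comm (Real.log q) q, mul_comm (q * Real.log q) β]
    -- step 3: z*log z < q*log q ↔ z < q
    have step3 : (z * Real.log z < q * Real.log q) ↔ z < q := by
      constructor
      · intro h
        by_contra hle
        push_neg at hle
        have h4 : q * Real.log q ≤ z * Real.log z := hmono.monotoneOn hqge hzmem.1 hle
        exact absurd h (not_lt.mpr h4)
      · intro h
        exact hmono hzmem.1 hqge h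

    -- step 4: z < q ↔ z^β < q^β = p
    have hznn : 0 ≤ z := le_trans (le_of_lt hepos) hzmem.1
    have step4 : (z < q) ↔ z ^ β < p := by
      rw [hpq]
      constructor
      · intro h
        exact Real.rpow_lt_rpow hznn h hβ
      · intro h
        by_contra hle
        push_neg at hle
        exact absurd h (not_lt.mpr (Real.rpow_le_rpow (le_of_lt hqpos) hle (le_of_lt hβ)))
    exact (step1.trans (step2.trans (step3.trans step4)))
end
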